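/- Let G = (V,E) be a simple graph, v ∈ V, e = uv ∈ E with u of degree 1 in a forest F ⊆ E containing e, and let F_v = {vw ∈ F : w ≠ u}. Then the vector g = −1_e + X(F_v) (value −1 on e, +1 on each edge of F_v, 0 elsewhere) is a circuit of the rank-inequality system (Rank). -/

import Mathlib

/-!
Every edge in the support of `g` contains `v`, so for each `f ∈ F_v` the only support edges
spanned by the endpoints of `e` and `f` are `e` and `f` themselves, and `g e + g f = 0`.
If `B y` is supported inside `supp (B g)`, then testing `y` on the endpoint pair of a single
edge shows `supp y ⊆ supp g`, and testing it on the endpoints of `e ∪ f` gives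
`y f = -y e`. Hence `y` is a multiple of `g`, so `B y` has the same support as `B g`.
-/

/-- The row of the rank-inequality matrix indexed by `U ⊆ V`, applied to `g`:
`∑_{e ∈ E(G[U])} g(e)`. -/
def rowSum {V : Type*} [Fintype V] [DecidableEq V] (G : SimpleGraph V) [DecidableRel G.Adj]
    (g : G.edgeSet → ℝ) (U : Finset V) : ℝ :=
  ∑ e : G.edgeSet, if ∀ v ∈ (e : Sym2 V), v ∈ U then g e else 0

/-- The support of `B g` for the rank-inequality matrix `B`: the nonempty sets `U` whose
rank row evaluates to a nonzero value on `g`. -/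
def Bsupp {V : Type*} [Fintype V] [DecidableEq V] (G : SimpleGraph V) [DecidableRel G.Adj]
    (g : G.edgeSet → ℝ) : Set (Finset V) :=
  {U | U.Nonempty ∧ rowSum G g U ≠ 0}

/-- A circuit of the rank-inequality system: a nonzero vector `g` such that `B g` is
support-minimal over `{B x : x ≠ 0}`. -/
def IsCircuit {V : Type*} [Fintype V] [DecidableEq V] (G : SimpleGraph V) [DecidableRel G.Adj]
    (g : G.edgeSet → ℝ) : Prop :=
  g ≠ 0 ∧ ∀ y : G.edgeSet → ℝ, y ≠ 0 → ¬ Bsupp G y ⊂ Bsupp G g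

/-- The unit vector supported on the edge `e`. -/
def unitVec {V : Type*} [DecidableEq V] (G : SimpleGraph V) (e : G.edgeSet) :
    G.edgeSet → ℝ :=
  fun f => if f = e then 1 else 0

/-- The spanning subgraph of `G` with edge set `R`. -/
def edgeSub {V : Type*} (G : SimpleGraph V) (R : Set G.edgeSet) : SimpleGraph V where
  Adj u v := u ≠ v ∧ ∃ e ∈ R, (e : Sym2 V) = s(u, v)
  symm := by
    constructor
    rintro u v ⟨huv, e, heR, he⟩
    exact ⟨huv.symm, e, heR, by rw [he, Sym2.eq_swap]⟩
  loopless := by constructor; rintro v ⟨hv, _⟩; exact hv rfl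

namespace SimpleGraph

variable {V : Type*} {G : SimpleGraph V}

lemma exists_edge_eq_mk_of_mem (a : G.edgeSet) {x : V} (hx : x ∈ (a : Sym2 V)) :
    ∃ z, (a : Sym2 V) = s(x, z) ∧ x ≠ z :=
  ⟨Sym2.Mem.other hx, (Sym2.other_spec hx).symm, (G.edge_other_ne a.2 hx).symm⟩

lemma edge_eq_mk_of_forall_mem_pair [DecidableEq V] (a : G.edgeSet) {x z : V}
    (h : ∀ w ∈ (a : Sym2 V), w ∈ ({x, z} : Finset V)) : (a : Sym2 V) = s(x, z) := by
  obtain ⟨q, ha, hpq⟩ := exists_edge_eq_mk_of_mem a (Sym2.out_fst_mem _)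
  rw [ha] at h ⊢
  have hp := h _ (Sym2.mem_mk_left _ _)
  have hq := h _ (Sym2.mem_mk_right _ _)
  simp only [Finset.mem_insert, Finset.mem_singleton] at hp hq
  rcases hp with hp | hp <;> rcases hq with rfl | rfl <;> simp_all [Sym2.eq_swap]

end SimpleGraph

open SimpleGraph

section RankSystem

variable {V : Type*} [Fintype V] [DecidableEq V] {G : SimpleGraph V} [DecidableRel G.Adj]

lemma rowSum_eq_sum {y : G.edgeSet → ℝ} {U : Finset V} {S : Finset G.edgeSet}
    (hS : ∀ a ∈ S, ∀ x ∈ (a : Sym2 V), x ∈ U)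
    (hy : ∀ a : G.edgeSet, (∀ x ∈ (a : Sym2 V), x ∈ U) → y a ≠ 0 → a ∈ S) :
    rowSum G y U = ∑ a ∈ S, y a := by
  rw [rowSum, ← Finset.sum_filter]
  refine (Finset.sum_subset (fun a ha => ?_) fun a ha haS => ?_).symm
  · simpa using hS a ha
  · by_contra hya
    exact haS (hy a (by simpa using ha) hya)

lemma rowSum_smul (c : ℝ) (y : G.edgeSet → ℝ) (U : Finset V) :
    rowSum G (c • y) U = c * rowSum G y U := by
  simp only [rowSum, Finset.mul_sum, Pi.smul_apply, smul_eq_mul, mul_ite, mul_zero]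

lemma Bsupp_smul {c : ℝ} (hc : c ≠ 0) (y : G.edgeSet → ℝ) :
    Bsupp G (c • y) = Bsupp G y := by
  ext U
  simp [Bsupp, rowSum_smul, hc]

lemma isCircuit_of_forall_Bsupp_subset {g : G.edgeSet → ℝ} (hg : g ≠ 0)
    (h : ∀ y, Bsupp G y ⊆ Bsupp G g → ∃ c : ℝ, y = c • g) : IsCircuit G g := by
  refine ⟨hg, fun y hy hss => ?_⟩
  obtain ⟨c, rfl⟩ := h y hss.subset
  have hc : c ≠ 0 := by
    rintro rfl
    exact hy (zero_smul ℝ g)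
  rw [Bsupp_smul hc] at hss
  exact hss.ne rfl

variable {y g : G.edgeSet → ℝ}

lemma sum_eq_zero_of_Bsupp_subset (h : Bsupp G y ⊆ Bsupp G g) {U : Finset V} (hU : U.Nonempty)
    {S : Finset G.edgeSet} (hS : ∀ a ∈ S, ∀ x ∈ (a : Sym2 V), x ∈ U)
    (hSy : ∀ a : G.edgeSet, (∀ x ∈ (a : Sym2 V), x ∈ U) → y a ≠ 0 → a ∈ S)
    (hSg : ∀ a : G.edgeSet, (∀ x ∈ (a : Sym2 V), x ∈ U) → g a ≠ 0 → a ∈ S)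
    (hg : ∑ a ∈ S, g a = 0) : ∑ a ∈ S, y a = 0 := by
  by_contra hy
  have hUg := h ⟨hU, by rwa [rowSum_eq_sum hS hSy]⟩
  exact hUg.2 (by rw [rowSum_eq_sum hS hSg, hg])

lemma apply_eq_zero_of_Bsupp_subset (h : Bsupp G y ⊆ Bsupp G g) {a : G.edgeSet}
    (hga : g a = 0) : y a = 0 := by
  obtain ⟨x, hx⟩ : ∃ x, x ∈ (a : Sym2 V) := ⟨_, Sym2.out_fst_mem _⟩
  obtain ⟨z, ha, -⟩ := exists_edge_eq_mk_of_mem a hx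
  have hS : ∀ b ∈ ({a} : Finset G.edgeSet), ∀ w ∈ (b : Sym2 V),
      w ∈ ({x, z} : Finset V) := by
    rintro b hb w hw
    rw [Finset.mem_singleton.1 hb, ha] at hw
    rcases Sym2.mem_iff.1 hw with rfl | rfl <;> simp
  have hspan : ∀ b : G.edgeSet, (∀ w ∈ (b : Sym2 V), w ∈ ({x, z} : Finset V)) →
      b ∈ ({a} : Finset G.edgeSet) := fun b hb =>
    Finset.mem_singleton.2 (Subtype.ext ((edge_eq_mk_of_forall_mem_pair b hb).trans ha.symm))
  simpa using sum_eq_zero_of_Bsupp_subset h (Finset.insert_nonempty _ _) hS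
    (fun b hb _ => hspan b hb) (fun b hb _ => hspan b hb) (by simpa using hga)

lemma add_eq_zero_of_Bsupp_subset_of_star (h : Bsupp G y ⊆ Bsupp G g) {v : V}
    (hstar : ∀ a : G.edgeSet, g a ≠ 0 → v ∈ (a : Sym2 V)) {e f : G.edgeSet}
    (he : v ∈ (e : Sym2 V)) (hf : v ∈ (f : Sym2 V)) (hef : e ≠ f) (hg : g e + g f = 0) :
    y e + y f = 0 := by
  obtain ⟨u, hu, -⟩ := exists_edge_eq_mk_of_mem e he
  obtain ⟨w, hw, -⟩ := exists_edge_eq_mk_of_mem f hf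
  have hS : ∀ a ∈ ({e, f} : Finset G.edgeSet), ∀ x ∈ (a : Sym2 V),
      x ∈ ({u, v, w} : Finset V) := by
    simp only [Finset.mem_insert, Finset.mem_singleton]
    rintro a (rfl | rfl) x hx
    · rw [hu] at hx; rcases Sym2.mem_iff.1 hx with rfl | rfl <;> simp
    · rw [hw] at hx; rcases Sym2.mem_iff.1 hx with rfl | rfl <;> simp
  have hspan : ∀ a : G.edgeSet, (∀ x ∈ (a : Sym2 V), x ∈ ({u, v, w} : Finset V)) →
      g a ≠ 0 → a ∈ ({e, f} : Finset G.edgeSet) := by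
    intro a ha hga
    obtain ⟨z, hz, hvz⟩ := exists_edge_eq_mk_of_mem a (hstar a hga)
    have hzU := ha z (by rw [hz]; exact Sym2.mem_mk_right _ _)
    simp only [Finset.mem_insert, Finset.mem_singleton] at hzU ⊢
    rcases hzU with rfl | rfl | rfl
    · exact Or.inl (Subtype.ext (hz.trans hu.symm))
    · exact absurd rfl hvz
    · exact Or.inr (Subtype.ext (hz.trans hw.symm))
  have hsupp : ∀ a : G.edgeSet, y a ≠ 0 → g a ≠ 0 := fun a hya hga =>
    hya (apply_eq_zero_of_Bsupp_subset h hga)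
  simpa [Finset.sum_pair hef] using sum_eq_zero_of_Bsupp_subset h (Finset.insert_nonempty _ _)
    hS (fun a ha hya => hspan a ha (hsupp a hya)) hspan (by simpa [Finset.sum_pair hef] using hg)

end RankSystem

theorem stmt16_general {V : Type*} [Fintype V] [DecidableEq V] (G : SimpleGraph V)
    [DecidableRel G.Adj] (F : Finset G.edgeSet)
    (e : G.edgeSet) (u v : V)
    (he : (e : Sym2 V) = s(u, v)) :
    IsCircuit G (fun f => if f = e then (-1 : ℝ)
      else if f ∈ F ∧ v ∈ (f : Sym2 V) then 1 else 0) := by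
  set g : G.edgeSet → ℝ := fun f => if f = e then (-1 : ℝ)
    else if f ∈ F ∧ v ∈ (f : Sym2 V) then 1 else 0
  have hve : v ∈ (e : Sym2 V) := he ▸ Sym2.mem_mk_right u v
  have hstar : ∀ a : G.edgeSet, g a ≠ 0 → v ∈ (a : Sym2 V) := by
    intro a hga
    by_cases hae : a = e
    · exact hae ▸ hve
    · by_contra hva
      simp [g, hae, hva] at hga
  refine isCircuit_of_forall_Bsupp_subset (fun h0 => by simpa [g] using congrFun h0 e)
    fun y hy => ⟨-y e, funext fun a => ?_⟩
  by_cases hae : a = e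
  · simp [g, hae]
  by_cases haF : a ∈ F ∧ v ∈ (a : Sym2 V)
  · have hga : g a = 1 := by simp [g, hae, haF]
    have hpair := add_eq_zero_of_Bsupp_subset_of_star hy hstar hve haF.2 (Ne.symm hae)
      (by simp [g, hga])
    rw [Pi.smul_apply, hga, smul_eq_mul]
    linarith
  · have hga : g a = 0 := by simp [g, hae, haF]
    simp [hga, apply_eq_zero_of_Bsupp_subset hy hga]

/-- The star-plus-opposite-edge vector: given a forest `F`, an edge `e = uv` of `F`
whose endpoint `u` is a leaf of `F`, the vector with value `-1` on `e`, value `1` on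
every other edge of `F` containing `v`, and `0` elsewhere, is a circuit of the
rank-inequality system. -/
theorem stmt16 {V : Type*} [Fintype V] [DecidableEq V] (G : SimpleGraph V)
    [DecidableRel G.Adj] (F : Finset G.edgeSet)
    (hforest : (edgeSub G (↑F : Set G.edgeSet)).IsAcyclic)
    (e : G.edgeSet) (heF : e ∈ F) (u v : V)
    (he : (e : Sym2 V) = s(u, v))
    (hleaf : ∀ f ∈ F, u ∈ (f : Sym2 V) → f = e) :
    IsCircuit G (fun f => if f = e then (-1 : ℝ)
      else if f ∈ F ∧ v ∈ (f : Sym2 V) then 1 else 0) :=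
  stmt16_general G F e u v he
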